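/- Let X be a shift space over a finite alphabet A and let a, b ∈ A with a ≠ b. Suppose that for every point x ∈ X and every i ∈ ℤ, x_{i+1} = b if and only if x_i = a. Then X is flow equivalent to X^{b↦ε}, the shift space obtained by deleting every occurrence of the letter b from every point of X and closing the resulting set under the shift map. -/

import Mathlib

open Filter

namespace SymbDyn

/-- A point of a (full) shift: a bi-infinite sequence of symbols, where symbols
are drawn from the universal symbol set `ℕ`. -/
abbrev Point : Type := ℤ → ℕ

/-- The shift map `σ`, with `σ(x) i = x (i + 1)`. -/
def shift (x : Point) : Point := fun i => x (i + 1)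

/-- The word `w` occurs in `x` starting at position `i`. -/
def MatchesAt (w : List ℕ) (x : Point) (i : ℤ) : Prop :=
  ∀ j : Fin w.length, x (i + ((j : ℕ) : ℤ)) = w.get j

/-- The word `w` occurs (as a factor) somewhere in the point `x`. -/
def occursIn (w : List ℕ) (x : Point) : Prop := ∃ i : ℤ, MatchesAt w x i

/-- All points over the alphabet `A` in which no word of `F` occurs. -/
def XF (A : Set ℕ) (F : Set (List ℕ)) : Set Point :=
  { x | (∀ i, x i ∈ A) ∧ ∀ w ∈ F, ¬ occursIn w x }

/-- A shift space: a set of the form `X_F` over some finite alphabet. -/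
def IsShiftSpace (X : Set Point) : Prop :=
  ∃ A : Set ℕ, A.Finite ∧ ∃ F : Set (List ℕ), X = XF A F

/-- A shift of finite type: `X_F` for a finite set `F` of forbidden words. -/
def IsSFT (X : Set Point) : Prop :=
  ∃ A : Set ℕ, A.Finite ∧ ∃ F : Set (List ℕ), F.Finite ∧ X = XF A F

/-- The language `B(X)` of a shift space `X`. -/
def language (X : Set Point) : Set (List ℕ) := { w | ∃ x ∈ X, occursIn w x }

/-- The words of length `n` in the language of `X`, i.e. `B_n(X)`. -/
def Bn (X : Set Point) (n : ℕ) : Set (List ℕ) := { w ∈ language X | w.length = n }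

/-- The set of symbols actually occurring in points of `X`. -/
def alphabet (X : Set Point) : Set ℕ := { a | ∃ x ∈ X, ∃ i : ℤ, x i = a }

/-- `φ` is a sliding block code from `X` to `Y`: it maps `X` into `Y` and there are
`m, n` and a block map `Φ` with `φ(x) i = Φ (x (i - m) … x (i + n))` on `X`. -/
def IsSlidingBlockCode (X Y : Set Point) (φ : Point → Point) : Prop :=
  Set.MapsTo φ X Y ∧
    ∃ (m n : ℕ) (Φ : List ℕ → ℕ), ∀ x ∈ X, ∀ i : ℤ,
      φ x i = Φ (List.ofFn fun j : Fin (m + n + 1) => x (i - (m : ℤ) + ((j : ℕ) : ℤ)))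

/-- `X` and `Y` are conjugate: there is a bijective sliding block code from `X` onto `Y`. -/
def Conjugate (X Y : Set Point) : Prop :=
  ∃ φ : Point → Point, IsSlidingBlockCode X Y φ ∧ Set.BijOn φ X Y

/-- A sofic shift: the image of a shift of finite type under a surjective sliding
block code. -/
def IsSofic (X : Set Point) : Prop :=
  ∃ Z : Set Point, IsSFT Z ∧ ∃ φ : Point → Point,
    IsSlidingBlockCode Z X φ ∧ Set.SurjOn φ Z X

/-- `y` is obtained from `x` by replacing every occurrence of the word `u` by the
word `v` (up to an overall shift).  Here `s k` enumerates, in order, the starting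
positions of the blocks of `x` (each block being either an occurrence of `u`, all
occurrences of `u` being blocks, or a single letter), and `t k` is the starting
position in `y` of the block corresponding to block `k` of `x`. -/
def ReplacedBy (u v : List ℕ) (x y : Point) : Prop :=
  u ≠ [] ∧
    ∃ s t : ℤ → ℤ,
      (∀ i : ℤ, MatchesAt u x i → ∃ k, s k = i) ∧
      (∀ m : ℤ, ∃ k, t k ≤ m ∧ m < t (k + 1)) ∧
      ∀ k : ℤ,
        (MatchesAt u x (s k) →
          s (k + 1) = s k + (u.length : ℤ) ∧ t (k + 1) = t k + (v.length : ℤ) ∧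
            ∀ j : Fin v.length, y (t k + ((j : ℕ) : ℤ)) = v.get j) ∧
        (¬ MatchesAt u x (s k) →
          s (k + 1) = s k + 1 ∧ t (k + 1) = t k + 1 ∧ y (t k) = x (s k))

/-- `X^{u ↦ v}`: the set obtained from `X` by replacing every occurrence of the
word `u` by the word `v` in every point, closed under the shift map. -/
def ReplaceWord (u v : List ℕ) (X : Set Point) : Set Point :=
  { y | ∃ x ∈ X, ReplacedBy u v x y }

/-- `Y` is a symbol expansion `X^{a ↦ a◊}` of `X`, for a letter `a` of `X` and a
symbol `◊` not in the alphabet of `X`. -/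
def IsSymbolExpansionOf (Y X : Set Point) : Prop :=
  ∃ a dia : ℕ, a ∈ alphabet X ∧ dia ∉ alphabet X ∧ Y = ReplaceWord [a] [a, dia] X

/-- One step of the Parry–Sullivan chain: both sets are shift spaces, and they are
conjugate or one is a symbol expansion of the other. -/
def FEStep (X Y : Set Point) : Prop :=
  IsShiftSpace X ∧ IsShiftSpace Y ∧
    (Conjugate X Y ∨ Conjugate Y X ∨ IsSymbolExpansionOf Y X ∨ IsSymbolExpansionOf X Y)

/-- Flow equivalence (Parry–Sullivan): a finite chain of conjugacies and symbol
expansions/contractions. -/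
def FlowEquiv (X Y : Set Point) : Prop := Relation.ReflTransGen FEStep X Y

/-- The entropy `h(X) = lim_{n→∞} (1/n) log₂ |B_n(X)|` of a shift space
(stated via `limsup`; for shift spaces the limit exists). -/
noncomputable def entropy (X : Set Point) : ℝ :=
  Filter.limsup (fun n : ℕ => Real.logb 2 ((Bn X n).ncard : ℝ) / (n : ℝ)) Filter.atTop

/-- `h([X])`: the set of entropies of shift spaces flow equivalent to `X`. -/
def entropySet (X : Set Point) : Set ℝ :=
  { r | ∃ Y : Set Point, IsShiftSpace Y ∧ FlowEquiv Y X ∧ entropy Y = r }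

/-- A set of reals is dense in `ℝ⁺`. -/
def DenseInPos (s : Set ℝ) : Prop :=
  ∀ r : ℝ, 0 < r → ∀ ε : ℝ, 0 < ε → ∃ e ∈ s, |e - r| < ε

/-- `X` is irreducible: any two words of the language can be joined inside it. -/
def IrreducibleShift (X : Set Point) : Prop :=
  ∀ u ∈ language X, ∀ v ∈ language X, ∃ w : List ℕ, u ++ w ++ v ∈ language X

/-- `w` is intrinsically synchronising for `X`. -/
def IntrinsicallySynchronising (X : Set Point) (w : List ℕ) : Prop :=
  ∀ v u : List ℕ, v ++ w ∈ language X → w ++ u ∈ language X →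
    v ++ w ++ u ∈ language X

/-- `X` admits non-trivial `w`-overlaps: there is a word `v` in the language of `X`
with `|w| < |v| < 2|w|` having `w` both as a prefix and as a suffix. -/
def AdmitsNontrivialOverlaps (X : Set Point) (w : List ℕ) : Prop :=
  ∃ v ∈ language X, w.length < v.length ∧ v.length < 2 * w.length ∧ w <+: v ∧ w <:+ v

/-- The full shift over the alphabet `A`. -/
def fullShift (A : Set ℕ) : Set Point := { x | ∀ i, x i ∈ A }

/-- The word `1 0^k 1`. -/
def gapWord (k : ℕ) : List ℕ := 1 :: (List.replicate k 0 ++ [1])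

open Classical in
/-- The forbidden words of the `S`-gap shift. -/
noncomputable def sGapForbidden (S : Set ℕ) : Set (List ℕ) :=
  if S.Finite then
    { w | ∃ k : ℕ, k ∉ S ∧ k < sSup S ∧ w = gapWord k } ∪ {List.replicate (1 + sSup S) 0}
  else
    { w | ∃ k : ℕ, k ∉ S ∧ w = gapWord k }

/-- The `S`-gap shift `X(S)` over the alphabet `{0, 1}`. -/
noncomputable def sGapShift (S : Set ℕ) : Set Point :=
  XF {0, 1} (sGapForbidden S)


section FEAux

/-- Partial sums over `ℤ`: `psum h k = h 0 + ⋯ + h (k-1)` for `k ≥ 0`,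
`-(h (-1) + ⋯ + h k)` for `k < 0`. -/
def psum (h : ℤ → ℤ) (k : ℤ) : ℤ :=
  if 0 ≤ k then ∑ j ∈ Finset.range k.toNat, h j
  else -∑ j ∈ Finset.range (-k).toNat, h (-((j : ℤ) + 1))

lemma psum_zero (h : ℤ → ℤ) : psum h 0 = 0 := by simp [psum]

lemma psum_succ (h : ℤ → ℤ) (k : ℤ) : psum h (k + 1) = psum h k + h k := by
  rcases le_or_gt 0 k with hk | hk
  · have hk1 : 0 ≤ k + 1 := by omega
    have hkt : (k + 1).toNat = k.toNat + 1 := by omega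
    rw [psum, psum, if_pos hk1, if_pos hk, hkt, Finset.sum_range_succ]
    congr 2
    omega
  · rcases eq_or_lt_of_le (by omega : k + 1 ≤ 0) with hk1 | hk1
    · have hkm : k = -1 := by omega
      subst hkm
      simp [psum]
    · have hnk : (-k).toNat = (-(k + 1)).toNat + 1 := by omega
      rw [psum, psum, if_neg (by omega), if_neg (by omega), hnk, Finset.sum_range_succ]
      have : -(((-(k + 1)).toNat : ℤ) + 1) = k := by omega
      rw [this]
      ring

lemma step_one (f : ℤ → ℤ) (hf : ∀ k, f (k + 1) = f k + 1) : ∀ k, f k = f 0 + k := by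
  intro k
  induction k using Int.induction_on with
  | zero => simp
  | succ n ih => rw [hf]; omega
  | pred n ih =>
      have := hf (-(n : ℤ) - 1)
      rw [show -(n : ℤ) - 1 + 1 = -(n : ℤ) by ring] at this
      push_cast
      omega

/-- Covering property: every integer is in some interval `[t k, t (k+1))`. -/
def Covers (t : ℤ → ℤ) : Prop := ∀ m : ℤ, ∃ k, t k ≤ m ∧ m < t (k + 1)

lemma covers_of (t : ℤ → ℤ) (mono : Monotone t)
    (lb : ∀ m, ∃ k, t k ≤ m) (ub : ∀ m, ∃ k, m < t k) : Covers t := by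
  intro m
  obtain ⟨k1, hk1⟩ := ub m
  have hbdd : ∃ b : ℤ, ∀ z : ℤ, t z ≤ m → z ≤ b := by
    refine ⟨k1, fun z hz => ?_⟩
    by_contra hzk
    have h2 : t k1 ≤ t z := mono (by omega)
    omega
  obtain ⟨k, hk, hmax⟩ := Int.exists_greatest_of_bdd hbdd (lb m)
  refine ⟨k, hk, ?_⟩
  by_contra hc
  have := hmax (k + 1) (by omega)
  omega

lemma steps_ge_one_up (t : ℤ → ℤ) (h : ∀ k, t k + 1 ≤ t (k + 1)) (c : ℤ) :
    ∀ n : ℕ, t c + n ≤ t (c + n) := by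
  intro n
  induction n with
  | zero => simp
  | succ n ih =>
      have := h (c + n)
      push_cast
      push_cast at ih
      rw [show c + ((n : ℤ) + 1) = (c + n) + 1 by ring]
      omega

lemma steps_ge_one_down (t : ℤ → ℤ) (h : ∀ k, t k + 1 ≤ t (k + 1)) (c : ℤ) :
    ∀ n : ℕ, t (c - n) ≤ t c - n := by
  intro n
  induction n with
  | zero => simp
  | succ n ih =>
      have := h (c - n - 1)
      rw [show c - (n : ℤ) - 1 + 1 = c - n by ring] at this
      push_cast
      push_cast at ih
      rw [show c - ((n : ℤ) + 1) = c - n - 1 by ring]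
      omega

lemma covers_of_steps (t : ℤ → ℤ) (h : ∀ k, t k + 1 ≤ t (k + 1)) : Covers t := by
  apply covers_of t (monotone_int_of_le_succ fun k => by have := h k; omega)
  · intro m
    refine ⟨0 - ((t 0 - m).toNat : ℤ), ?_⟩
    have h1 := steps_ge_one_down t h 0 (t 0 - m).toNat
    have h2 := Int.self_le_toNat (t 0 - m)
    omega
  · intro m
    refine ⟨0 + ((m - t 0 + 1).toNat : ℤ), ?_⟩
    have h1 := steps_ge_one_up t h 0 (m - t 0 + 1).toNat
    have h2 := Int.self_le_toNat (m - t 0 + 1)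
    omega

lemma matchesAt_single {c : ℕ} {x : Point} {i : ℤ} : MatchesAt [c] x i ↔ x i = c := by
  constructor
  · intro h
    have := h ⟨0, by norm_num⟩
    simpa using this
  · intro h j
    have hlt := j.isLt
    simp only [List.length_singleton] at hlt
    have hj : j = ⟨0, by norm_num⟩ := by
      apply Fin.ext
      simp only [Fin.val_mk]
      omega
    subst hj
    simpa using h

/-- `σ` is an "inflation anchor" for `x` over the base `y`: `x` looks like `y` with
`b` inserted after every `a`, and `σ m` is the position in `x` of the `m`-th letter
of `y`. -/
def InflAnchor (a b : ℕ) (y x : Point) (σ : ℤ → ℤ) : Prop :=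
  ∀ m : ℤ, x (σ m) = y m ∧ σ (m + 1) = σ m + (if y m = a then 2 else 1) ∧
    (y m = a → x (σ m + 1) = b)

lemma InflAnchor.step_ge_one {a b : ℕ} {y x : Point} {σ : ℤ → ℤ}
    (h : InflAnchor a b y x σ) (k : ℤ) : σ k + 1 ≤ σ (k + 1) := by
  have := (h k).2.1
  split at this <;> omega

lemma anchor_letters {a b : ℕ} {y x : Point} {σ : ℤ → ℤ}
    (hI : InflAnchor a b y x σ) (hc : Covers σ) (m : ℤ) :
    (∃ k, x m = y k) ∨ x m = b := by
  obtain ⟨k, h1, h2⟩ := hc m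
  obtain ⟨e1, e2, e3⟩ := hI k
  by_cases ha : y k = a
  · rw [if_pos ha] at e2
    rcases (by omega : m = σ k ∨ m = σ k + 1) with rfl | rfl
    · exact Or.inl ⟨k, e1⟩
    · exact Or.inr (e3 ha)
  · rw [if_neg ha] at e2
    have : m = σ k := by omega
    subst this
    exact Or.inl ⟨k, e1⟩

end FEAux
section FEAux2

/-- The letter-`b`-deleting position count for a point `x`. -/
def delT (b : ℕ) (x : Point) : ℤ → ℤ := psum (fun k => if x k = b then 0 else 1)

lemma delT_succ (b : ℕ) (x : Point) (k : ℤ) :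
    delT b x (k + 1) = delT b x k + (if x k = b then 0 else 1) := psum_succ _ k

lemma sigma_machine (a b : ℕ) (x : Point) (hP : ∀ i, x (i + 1) = b ↔ x i = a)
    (t : ℤ → ℤ) (hstep : ∀ k, t (k + 1) = t k + (if x k = b then 0 else 1))
    (hcov : Covers t) :
    ∃ σ : ℤ → ℤ, (∀ m, t (σ m) = m ∧ x (σ m) ≠ b) ∧
      (∀ m k, t k = m → x k ≠ b → k = σ m) ∧
      InflAnchor a b (fun m => x (σ m)) x σ ∧ Covers σ := by
  have mono : Monotone t := monotone_int_of_le_succ (fun k => by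
    have := hstep k
    split at this <;> omega)
  have hex : ∀ m, ∃ k, t k = m ∧ x k ≠ b := by
    intro m
    obtain ⟨k, h1, h2⟩ := hcov m
    have hs := hstep k
    by_cases hb : x k = b
    · rw [if_pos hb] at hs; omega
    · rw [if_neg hb] at hs; exact ⟨k, by omega, hb⟩
  choose σ hσ1 hσ2 using hex
  have uniq : ∀ m k, t k = m → x k ≠ b → k = σ m := by
    intro m k h1 h2
    by_contra hne
    rcases lt_or_gt_of_ne hne with hlt | hgt
    · have hs : t (k + 1) = t k + 1 := by rw [hstep, if_neg h2]
      have hm2 : t (k + 1) ≤ t (σ m) := mono (by omega)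
      have := hσ1 m
      omega
    · have hs : t (σ m + 1) = t (σ m) + 1 := by rw [hstep, if_neg (hσ2 m)]
      have hm2 : t (σ m + 1) ≤ t k := mono (by omega)
      have := hσ1 m
      omega
  have hstep2 : ∀ m, σ (m + 1) = σ m + (if x (σ m) = a then 2 else 1) ∧
      (x (σ m) = a → x (σ m + 1) = b) := by
    intro m
    have h1 : t (σ m) = m := hσ1 m
    have hnb : x (σ m) ≠ b := hσ2 m
    have ht1 : t (σ m + 1) = m + 1 := by rw [hstep, if_neg hnb, h1]
    by_cases ha : x (σ m) = a
    · have hb1 : x (σ m + 1) = b := (hP (σ m)).mpr ha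
      have ht2 : t (σ m + 2) = m + 1 := by
        have := hstep (σ m + 1)
        rw [if_pos hb1] at this
        rw [show σ m + 2 = σ m + 1 + 1 by ring, this, ht1]
        ring
      have hnb2 : x (σ m + 2) ≠ b := by
        intro hc
        have h2 := (hP (σ m + 1)).mp (by rw [show σ m + 1 + 1 = σ m + 2 by ring]; exact hc)
        rw [hb1] at h2
        exact hnb (ha.trans h2.symm)
      have := uniq (m + 1) (σ m + 2) ht2 hnb2
      constructor
      · rw [if_pos ha]; omega
      · intro _; exact hb1
    · have hnb1 : x (σ m + 1) ≠ b := fun hc => ha ((hP (σ m)).mp hc)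
      have := uniq (m + 1) (σ m + 1) ht1 hnb1
      exact ⟨by rw [if_neg ha]; omega, fun hc => absurd hc ha⟩
  have hanc : InflAnchor a b (fun m => x (σ m)) x σ := by
    intro m
    exact ⟨rfl, (hstep2 m).1, (hstep2 m).2⟩
  refine ⟨σ, fun m => ⟨hσ1 m, hσ2 m⟩, uniq, hanc, ?_⟩
  exact covers_of_steps σ (hanc.step_ge_one)

lemma delT_covers (b : ℕ) (x : Point) (hbb : ∀ k, x k = b → x (k + 1) ≠ b) :
    Covers (delT b x) := by
  set t := delT b x with ht
  have hstep : ∀ k, t (k + 1) = t k + (if x k = b then 0 else 1) := delT_succ b x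
  have mono : Monotone t := monotone_int_of_le_succ (fun k => by
    have := hstep k
    split at this <;> omega)
  have h2 : ∀ k, t k + 1 ≤ t (k + 2) := by
    intro k
    have e1 := hstep k
    have e2 := hstep (k + 1)
    rw [show k + 2 = k + 1 + 1 by ring]
    by_cases hb : x k = b
    · rw [if_pos hb] at e1
      rw [if_neg (hbb k hb)] at e2
      omega
    · rw [if_neg hb] at e1
      split at e2 <;> omega
  have key : ∀ n : ℕ, t 0 + n ≤ t (2 * n) ∧ t (-(2 * n : ℤ)) ≤ t 0 - n := by
    intro n
    induction n with
    | zero => simp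
    | succ n ih =>
        constructor
        · have := h2 (2 * n)
          have hmm : (2 * (n + 1) : ℤ) = 2 * n + 2 := by ring
          push_cast
          push_cast at ih
          rw [hmm]
          omega
        · have := h2 (-(2 * (n + 1) : ℤ))
          have hmm : (-(2 * (n + 1) : ℤ) + 2) = -(2 * n) := by ring
          rw [hmm] at this
          push_cast
          push_cast at ih this
          omega
  apply covers_of t mono
  · intro m
    refine ⟨-(2 * ((t 0 - m).toNat : ℤ)), ?_⟩
    have := (key (t 0 - m).toNat).2
    have h2' := Int.self_le_toNat (t 0 - m)
    omega
  · intro m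
    refine ⟨2 * ((m - t 0 + 1).toNat : ℤ), ?_⟩
    have := (key (m - t 0 + 1).toNat).1
    have h2' := Int.self_le_toNat (m - t 0 + 1)
    push_cast at this ⊢
    omega

end FEAux2
section FEAux3

lemma del_exists (a b : ℕ) (hab : a ≠ b) (x : Point)
    (hP : ∀ i, x (i + 1) = b ↔ x i = a) :
    ∃ σ : ℤ → ℤ, ReplacedBy [b] [] x (fun m => x (σ m)) ∧
      InflAnchor a b (fun m => x (σ m)) x σ ∧ Covers σ ∧
      (∀ m k, delT b x k = m → x k ≠ b → k = σ m) := by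
  have hbb : ∀ k, x k = b → x (k + 1) ≠ b := by
    intro k hk hk1
    exact hab ((hP k).mp hk1 ▸ hk ▸ rfl)
  have hcov : Covers (delT b x) := delT_covers b x hbb
  obtain ⟨σ, hσ, uniq, hanc, hcovσ⟩ :=
    sigma_machine a b x hP (delT b x) (delT_succ b x) hcov
  refine ⟨σ, ?_, hanc, hcovσ, uniq⟩
  refine ⟨by simp, fun k => k, delT b x, fun i _ => ⟨i, rfl⟩, hcov, ?_⟩
  intro k
  constructor
  · intro hm
    have hbk : x k = b := matchesAt_single.mp hm
    refine ⟨by norm_num, ?_, ?_⟩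
    · rw [delT_succ, if_pos hbk]; norm_num
    · intro j; exact absurd j.isLt (by simp)
  · intro hm
    have hbk : x k ≠ b := fun hh => hm (matchesAt_single.mpr hh)
    refine ⟨rfl, by rw [delT_succ, if_neg hbk], ?_⟩
    have := uniq (delT b x k) k rfl hbk
    exact congrArg x this.symm

lemma del_to_anchor (a b : ℕ) (x y : Point)
    (hP : ∀ i, x (i + 1) = b ↔ x i = a) (hR : ReplacedBy [b] [] x y) :
    ∃ σ : ℤ → ℤ, InflAnchor a b y x σ ∧ Covers σ ∧ ∀ m, y m = x (σ m) := by
  obtain ⟨-, s, t, hC1, hC2, hC3⟩ := hR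
  have hs1 : ∀ k, s (k + 1) = s k + 1 := by
    intro k
    by_cases hm : MatchesAt [b] x (s k)
    · have := ((hC3 k).1 hm).1; simpa using this
    · exact ((hC3 k).2 hm).1
  have hslin := step_one s hs1
  set T : ℤ → ℤ := fun k => t (k - s 0) with hT
  have hsk : ∀ k : ℤ, s (k - s 0) = k := by
    intro k; rw [hslin]; ring
  have hTstep : ∀ k, T (k + 1) = T k + (if x k = b then 0 else 1) := by
    intro k
    have e0 : k + 1 - s 0 = (k - s 0) + 1 := by ring
    by_cases hb : x k = b
    · have hm : MatchesAt [b] x (s (k - s 0)) := by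
        rw [hsk]; exact matchesAt_single.mpr hb
      have := ((hC3 (k - s 0)).1 hm).2.1
      simp only [hT, e0, this, List.length_nil, if_pos hb]
      norm_num
    · have hm : ¬ MatchesAt [b] x (s (k - s 0)) := by
        rw [hsk]; exact fun hh => hb (matchesAt_single.mp hh)
      have := ((hC3 (k - s 0)).2 hm).2.1
      simp only [hT, e0, this, if_neg hb]
  have hTcov : Covers T := by
    intro m
    obtain ⟨k, h1, h2⟩ := hC2 m
    refine ⟨k + s 0, ?_, ?_⟩
    · simpa only [hT, add_sub_cancel_right] using h1
    · have e0 : k + s 0 + 1 - s 0 = k + 1 := by ring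
      simpa only [hT, e0] using h2
  obtain ⟨σ, hσ, uniq, hanc, hcovσ⟩ := sigma_machine a b x hP T hTstep hTcov
  have hy : ∀ m, y m = x (σ m) := by
    intro m
    have h1 : T (σ m) = m := (hσ m).1
    have h2 : x (σ m) ≠ b := (hσ m).2
    have hm : ¬ MatchesAt [b] x (s (σ m - s 0)) := by
      rw [hsk]; exact fun hh => h2 (matchesAt_single.mp hh)
    have e3 := ((hC3 (σ m - s 0)).2 hm).2.2
    rw [hsk] at e3
    have : t (σ m - s 0) = m := h1
    rw [this] at e3
    exact e3
  refine ⟨σ, ?_, hcovσ, hy⟩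
  intro m
  obtain ⟨e1, e2, e3⟩ := hanc m
  refine ⟨(hy m).symm, ?_, fun hh => e3 ((hy m).symm.trans hh)⟩
  simp only [show x (σ m) = y m from (hy m).symm] at e2
  exact e2

lemma ab_to_anchor (a b : ℕ) (y z : Point) (hR : ReplacedBy [a] [a, b] y z) :
    ∃ σ : ℤ → ℤ, InflAnchor a b y z σ ∧ Covers σ := by
  obtain ⟨-, s, t, hC1, hC2, hC3⟩ := hR
  have hs1 : ∀ k, s (k + 1) = s k + 1 := by
    intro k
    by_cases hm : MatchesAt [a] y (s k)
    · have := ((hC3 k).1 hm).1; simpa using this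
    · exact ((hC3 k).2 hm).1
  have hslin := step_one s hs1
  set T : ℤ → ℤ := fun k => t (k - s 0) with hT
  have hsk : ∀ k : ℤ, s (k - s 0) = k := by
    intro k; rw [hslin]; ring
  have hTcov : Covers T := by
    intro m
    obtain ⟨k, h1, h2⟩ := hC2 m
    refine ⟨k + s 0, ?_, ?_⟩
    · simpa only [hT, add_sub_cancel_right] using h1
    · have e0 : k + s 0 + 1 - s 0 = k + 1 := by ring
      simpa only [hT, e0] using h2
  refine ⟨T, ?_, hTcov⟩
  intro k
  have e0 : k + 1 - s 0 = (k - s 0) + 1 := by ring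
  by_cases ha : y k = a
  · have hm : MatchesAt [a] y (s (k - s 0)) := by
      rw [hsk]; exact matchesAt_single.mpr ha
    obtain ⟨-, e2, e3⟩ := (hC3 (k - s 0)).1 hm
    have g0 : z (t (k - s 0) + ((0 : ℕ) : ℤ)) = a := e3 ⟨0, by norm_num⟩
    have g1 : z (t (k - s 0) + ((1 : ℕ) : ℤ)) = b := e3 ⟨1, by norm_num⟩
    refine ⟨?_, ?_, fun _ => ?_⟩
    · simpa [ha] using g0
    · simp only [hT, e0, e2, List.length_cons, List.length_nil, if_pos ha]
      norm_num
    · simpa using g1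
  · have hm : ¬ MatchesAt [a] y (s (k - s 0)) := by
      rw [hsk]; exact fun hh => ha (matchesAt_single.mp hh)
    obtain ⟨-, e2, e3⟩ := (hC3 (k - s 0)).2 hm
    rw [hsk] at e3
    exact ⟨e3, by simp only [hT, e0, e2, if_neg ha], fun hh => absurd hh ha⟩

lemma anchor_to_ab (a b : ℕ) (y x : Point) (σ : ℤ → ℤ)
    (hI : InflAnchor a b y x σ) (hc : Covers σ) : ReplacedBy [a] [a, b] y x := by
  refine ⟨by simp, fun k => k, σ, fun i _ => ⟨i, rfl⟩, hc, ?_⟩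
  intro k
  constructor
  · intro hm
    have ha := matchesAt_single.mp hm
    have h0 := (hI k).1
    have h1 := (hI k).2.2 ha
    have h2 := (hI k).2.1
    rw [if_pos ha] at h2
    refine ⟨by norm_num, by simpa using h2, ?_⟩
    intro j
    fin_cases j
    · simpa [ha] using h0
    · simpa using h1
  · intro hm
    have ha : y k ≠ a := fun hh => hm (matchesAt_single.mpr hh)
    have h2 := (hI k).2.1
    rw [if_neg ha] at h2
    exact ⟨rfl, h2, (hI k).1⟩

lemma match_aux {a b : ℕ} {y y' x x' : Point} {σ σ' : ℤ → ℤ}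
    (hI : InflAnchor a b y x σ) (hI' : InflAnchor a b y' x' σ') (q q' : ℤ) :
    ∀ e : ℕ, (∀ e' : ℕ, e' < e → y (q + e') = y' (q' + e')) →
      σ (q + e) - σ q = σ' (q' + e) - σ' q' ∧
      ∀ d : ℤ, 0 ≤ d → d < σ (q + e) - σ q → x (σ q + d) = x' (σ' q' + d) := by
  intro e
  induction e with
  | zero =>
      intro _
      constructor
      · norm_num
      · intro d h0 h1
        norm_num at h1
        omega
  | succ e ih =>
      intro hw
      obtain ⟨hd, hx⟩ := ih (fun e' he' => hw e' (by omega))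
      have hww : y (q + e) = y' (q' + e) := hw e (by omega)
      have s1 := (hI (q + e)).2.1
      have s2 := (hI' (q' + e)).2.1
      rw [← hww] at s2
      have q1 : q + ((e : ℕ) + 1 : ℤ) = (q + e) + 1 := by ring
      have q2 : q' + ((e : ℕ) + 1 : ℤ) = (q' + e) + 1 := by ring
      have hy1 := (hI (q + e)).1
      have hy2 := (hI' (q' + e)).1
      by_cases ha : y (q + e) = a
      · rw [if_pos ha] at s1 s2
        constructor
        · push_cast
          rw [q1, q2, s1, s2]
          omega
        · intro d h0 h1
          push_cast at h1
          rw [q1, s1] at h1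
          rcases lt_trichotomy d (σ (q + e) - σ q) with hlt | heq | hgt
          · exact hx d h0 hlt
          · have e1 : σ q + d = σ (q + e) := by omega
            have e2 : σ' q' + d = σ' (q' + e) := by omega
            rw [e1, e2, hy1, hy2, hww]
          · have e1 : σ q + d = σ (q + e) + 1 := by omega
            have e2 : σ' q' + d = σ' (q' + e) + 1 := by omega
            rw [e1, e2, (hI (q + e)).2.2 ha, (hI' (q' + e)).2.2 (hww ▸ ha)]
      · rw [if_neg ha] at s1 s2
        constructor
        · push_cast
          rw [q1, q2, s1, s2]
          omega
        · intro d h0 h1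
          push_cast at h1
          rw [q1, s1] at h1
          rcases lt_trichotomy d (σ (q + e) - σ q) with hlt | heq | hgt
          · exact hx d h0 hlt
          · have e1 : σ q + d = σ (q + e) := by omega
            have e2 : σ' q' + d = σ' (q' + e) := by omega
            rw [e1, e2, hy1, hy2, hww]
          · omega

lemma anchor_transfer {a b : ℕ} {y y' x x' : Point} {σ σ' : ℤ → ℤ}
    (hI : InflAnchor a b y x σ) (hI' : InflAnchor a b y' x' σ')
    (w : List ℕ) (p q q' : ℤ)
    (hq1 : σ q ≤ p) (hq2 : p < σ (q + 1))
    (hw : ∀ e : ℕ, e ≤ w.length → y (q + e) = y' (q' + e))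
    (hm : MatchesAt w x p) : occursIn w x' := by
  set n := w.length with hn
  refine ⟨σ' q' + (p - σ q), ?_⟩
  intro j
  have hj : (j : ℕ) < n := j.isLt
  obtain ⟨hd, hx⟩ := match_aux hI hI' q q' (n + 1) (fun e' he' => hw e' (by omega))
  have hb1 : σ (q + 1) + (n : ℤ) ≤ σ (q + 1 + n) :=
    steps_ge_one_up σ hI.step_ge_one (q + 1) n
  have h0 : 0 ≤ p - σ q + (j : ℤ) := by omega
  have h1 : p - σ q + ((j : ℕ) : ℤ) < σ (q + ((n : ℕ) + 1 : ℤ)) - σ q := by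
    rw [show q + ((n : ℕ) + 1 : ℤ) = q + 1 + n by ring]
    omega
  have hxx := hx (p - σ q + (j : ℕ)) h0 (by push_cast; push_cast at h1; exact h1)
  rw [show σ q + (p - σ q + ((j : ℕ) : ℤ)) = p + ((j : ℕ) : ℤ) by ring] at hxx
  rw [show σ' q' + (p - σ q) + ((j : ℕ) : ℤ) = σ' q' + (p - σ q + ((j : ℕ) : ℤ)) by ring]
  rw [← hxx]
  exact hm j

end FEAux3
section FEAux4

/-- Positions of the letters of `z` inside its inflation. -/
noncomputable def inflPi (a : ℕ) (z : Point) : ℤ → ℤ :=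
  psum (fun j => if z j = a then 2 else 1)

lemma inflPi_succ (a : ℕ) (z : Point) (j : ℤ) :
    inflPi a z (j + 1) = inflPi a z j + (if z j = a then 2 else 1) := psum_succ _ j

lemma inflPi_strictMono (a : ℕ) (z : Point) : StrictMono (inflPi a z) :=
  strictMono_int_of_lt_succ (fun j => by
    rw [inflPi_succ]; split <;> omega)

open Classical in
/-- The inflation of `z`: insert `b` after every occurrence of `a`. -/
noncomputable def infl (a b : ℕ) (z : Point) : Point := fun m =>
  if h : ∃ j, inflPi a z j = m then z h.choose else b

lemma infl_pi (a b : ℕ) (z : Point) (j : ℤ) : infl a b z (inflPi a z j) = z j := by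
  have hex : ∃ j', inflPi a z j' = inflPi a z j := ⟨j, rfl⟩
  rw [infl]
  rw [dif_pos hex]
  congr 1
  exact (inflPi_strictMono a z).injective hex.choose_spec

lemma infl_not (a b : ℕ) (z : Point) (m : ℤ) (hm : ∀ j, inflPi a z j ≠ m) :
    infl a b z m = b := by
  rw [infl, dif_neg]
  push_neg
  exact hm

lemma infl_gap (a b : ℕ) (z : Point) (j : ℤ) (hj : z j = a) :
    infl a b z (inflPi a z j + 1) = b := by
  apply infl_not
  intro j' hj'
  have hs : inflPi a z (j + 1) = inflPi a z j + 2 := by rw [inflPi_succ, if_pos hj]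
  rcases le_or_gt j' j with h | h
  · have := (inflPi_strictMono a z).monotone h
    omega
  · have := (inflPi_strictMono a z).monotone (by omega : j + 1 ≤ j')
    omega

lemma infl_anchor (a b : ℕ) (z : Point) :
    InflAnchor a b z (infl a b z) (inflPi a z) := by
  intro m
  exact ⟨infl_pi a b z m, inflPi_succ a z m, fun hm => infl_gap a b z m hm⟩

lemma inflPi_covers (a : ℕ) (z : Point) : Covers (inflPi a z) :=
  covers_of_steps _ (fun k => by rw [inflPi_succ]; split <;> omega)

lemma infl_P (a b : ℕ) (hab : a ≠ b) (z : Point) (hzb : ∀ j, z j ≠ b) :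
    ∀ i, infl a b z (i + 1) = b ↔ infl a b z i = a := by
  intro i
  obtain ⟨j, h1, h2⟩ := inflPi_covers a z i
  have hstep := inflPi_succ a z j
  by_cases ha : z j = a
  · rw [if_pos ha] at hstep
    rcases (by omega : i = inflPi a z j ∨ i = inflPi a z j + 1) with hi | hi
    · subst hi
      constructor
      · intro _; rw [infl_pi, ha]
      · intro _; exact infl_gap a b z j ha
    · subst hi
      constructor
      · intro hb1
        exfalso
        rw [show inflPi a z j + 1 + 1 = inflPi a z (j + 1) by omega, infl_pi] at hb1
        exact hzb _ hb1
      · intro ha1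
        exact absurd ((infl_gap a b z j ha).symm.trans ha1) (Ne.symm hab)
  · rw [if_neg ha] at hstep
    have hi : i = inflPi a z j := by omega
    subst hi
    constructor
    · intro hb1
      exfalso
      rw [show inflPi a z j + 1 = inflPi a z (j + 1) by omega, infl_pi] at hb1
      exact hzb _ hb1
    · intro ha1
      exfalso
      rw [infl_pi] at ha1
      exact ha ha1

lemma delT_pi_succ (a b : ℕ) (z : Point) (hzb : ∀ j, z j ≠ b) (j : ℤ) :
    delT b (infl a b z) (inflPi a z (j + 1)) = delT b (infl a b z) (inflPi a z j) + 1 := by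
  have h0 : infl a b z (inflPi a z j) ≠ b := by rw [infl_pi]; exact hzb j
  by_cases ha : z j = a
  · have hs : inflPi a z (j + 1) = inflPi a z j + 2 := by rw [inflPi_succ, if_pos ha]
    have e1 : delT b (infl a b z) (inflPi a z j + 1)
        = delT b (infl a b z) (inflPi a z j) + 1 := by
      rw [delT_succ, if_neg h0]
    have e2 : delT b (infl a b z) (inflPi a z j + 1 + 1)
        = delT b (infl a b z) (inflPi a z j + 1) := by
      rw [delT_succ, if_pos (infl_gap a b z j ha)]
      ring
    rw [show inflPi a z (j + 1) = inflPi a z j + 1 + 1 by omega, e2, e1]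
  · have hs : inflPi a z (j + 1) = inflPi a z j + 1 := by rw [inflPi_succ, if_neg ha]
    rw [hs, delT_succ, if_neg h0]

lemma delT_pi (a b : ℕ) (z : Point) (hzb : ∀ j, z j ≠ b) :
    ∀ j, delT b (infl a b z) (inflPi a z j) = j := by
  intro j
  induction j using Int.induction_on with
  | zero => rw [show inflPi a z 0 = 0 from psum_zero _]; exact psum_zero _
  | succ n ih =>
      have := delT_pi_succ a b z hzb n
      push_cast
      push_cast at this ih
      omega
  | pred n ih =>
      have := delT_pi_succ a b z hzb (-(n : ℤ) - 1)
      rw [show -(n : ℤ) - 1 + 1 = -(n : ℤ) by ring] at this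
      push_cast
      push_cast at this ih
      omega

end FEAux4
lemma del_point_letters {A : Set ℕ} {F : Set (List ℕ)} {b : ℕ} {y : Point}
    (hy : y ∈ ReplaceWord [b] [] (XF A F)) : ∀ m, y m ∈ A ∧ y m ≠ b := by
  obtain ⟨x, hx, -, s, t, hC1, hC2, hC3⟩ := hy
  intro m
  obtain ⟨k, h1, h2⟩ := hC2 m
  by_cases hm : MatchesAt [b] x (s k)
  · have := ((hC3 k).1 hm).2.1
    simp only [List.length_nil, Nat.cast_zero, add_zero] at this
    omega
  · obtain ⟨-, e2, e3⟩ := (hC3 k).2 hm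
    have hmk : m = t k := by omega
    rw [hmk, e3]
    exact ⟨hx.1 _, fun hh => hm (matchesAt_single.mpr hh)⟩

/-- If in every point of `X` the letter `b` occurs at position `i+1`
exactly when `a` occurs at position `i`, then `X` is flow equivalent to `X^{b ↦ ε}`. -/
theorem stmt1 (X : Set Point) (A : Set ℕ) (hA : A.Finite)
    (hX : ∃ F : Set (List ℕ), X = XF A F)
    (a b : ℕ) (ha : a ∈ A) (hb : b ∈ A) (hab : a ≠ b)
    (h : ∀ x ∈ X, ∀ i : ℤ, x (i + 1) = b ↔ x i = a) :
    FlowEquiv X (ReplaceWord [b] [] X) := by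
  obtain ⟨F, rfl⟩ := hX
  by_cases hax : a ∈ alphabet (XF A F)
  · set Y := ReplaceWord [b] [] (XF A F) with hYdef
    have hYss : IsShiftSpace Y := by
      refine ⟨A, hA, {w | w ∉ language Y}, ?_⟩
      ext z
      constructor
      · intro hz
        exact ⟨fun i => (del_point_letters hz i).1, fun w hw hocc => hw ⟨z, hz, hocc⟩⟩
      · rintro ⟨hz1, hz2⟩
        have hzb : ∀ j, z j ≠ b := by
          intro j hjb
          refine hz2 [b] ?_ ⟨j, matchesAt_single.mpr hjb⟩
          rintro ⟨y', hy', i, hmi⟩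
          exact (del_point_letters hy' i).2 (matchesAt_single.mp hmi)
        have hIz : InflAnchor a b z (infl a b z) (inflPi a z) := infl_anchor a b z
        have hcπ : Covers (inflPi a z) := inflPi_covers a z
        have hxX : infl a b z ∈ XF A F := by
          constructor
          · intro m
            rcases anchor_letters hIz hcπ m with ⟨k, hk⟩ | hk
            · rw [hk]; exact hz1 k
            · rw [hk]; exact hb
          · rintro w hwF ⟨p, hm⟩
            obtain ⟨q, hq1, hq2⟩ := hcπ p
            have hw'occ : MatchesAt (List.ofFn (fun e : Fin (w.length + 1) => z (q + (e : ℕ)))) z q := by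
              intro j
              rw [List.get_ofFn]
              simp
            have hw'lang : (List.ofFn (fun e : Fin (w.length + 1) => z (q + (e : ℕ)))) ∈ language Y := by
              by_contra hc
              exact hz2 _ hc ⟨q, hw'occ⟩
            obtain ⟨y', hyY2, r, hmr⟩ := hw'lang
            obtain ⟨x₁, hx₁, hR⟩ := hyY2
            obtain ⟨σ₁, hI1, hc1, -⟩ := del_to_anchor a b x₁ y' (h x₁ hx₁) hR
            have hwin : ∀ e : ℕ, e ≤ w.length → z (q + e) = y' (r + e) := by
              intro e he
              have hj : e < (List.ofFn (fun e : Fin (w.length + 1) => z (q + (e : ℕ)))).length := by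
                rw [List.length_ofFn]; omega
              have := hmr ⟨e, hj⟩
              rw [List.get_ofFn] at this
              simp at this
              exact this.symm
            exact hx₁.2 w hwF (anchor_transfer hIz hI1 w p q r hq1 hq2 hwin hm)
        have hPx : ∀ i, infl a b z (i + 1) = b ↔ infl a b z i = a := infl_P a b hab z hzb
        obtain ⟨σ₀, hR₀, -, -, huniq⟩ := del_exists a b hab (infl a b z) hPx
        have hzeq : (fun m => infl a b z (σ₀ m)) = z := by
          funext m
          have hu := huniq m (inflPi a z m) (delT_pi a b z hzb m)
            (by rw [infl_pi]; exact hzb m)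
          show infl a b z (σ₀ m) = z m
          rw [← hu, infl_pi]
        refine ⟨infl a b z, hxX, ?_⟩
        have hR₀' := hR₀
        rwa [hzeq] at hR₀'
    have hsymb : IsSymbolExpansionOf (XF A F) Y := by
      refine ⟨a, b, ?_, ?_, ?_⟩
      · obtain ⟨x0, hx0, i0, hi0⟩ := hax
        obtain ⟨σ₀, hR₀, -, -, huniq⟩ := del_exists a b hab x0 (h x0 hx0)
        refine ⟨fun m => x0 (σ₀ m), ⟨x0, hx0, hR₀⟩, delT b x0 i0, ?_⟩
        have hu := huniq (delT b x0 i0) i0 rfl (fun hh => hab (hi0.symm.trans hh))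
        show x0 (σ₀ (delT b x0 i0)) = a
        rw [← hu, hi0]
      · rintro ⟨y', hy', i, hyi⟩
        exact (del_point_letters hy' i).2 hyi
      · ext x
        constructor
        · intro hx
          obtain ⟨σ₀, hR₀, hI₀, hc₀, -⟩ := del_exists a b hab x (h x hx)
          exact ⟨fun m => x (σ₀ m), ⟨x, hx, hR₀⟩, anchor_to_ab a b _ x σ₀ hI₀ hc₀⟩
        · rintro ⟨y', hyY2, hRab⟩
          have hyY3 := hyY2
          obtain ⟨x₁, hx₁, hR₁⟩ := hyY3
          obtain ⟨σ₁, hI1, -, -⟩ := del_to_anchor a b x₁ y' (h x₁ hx₁) hR₁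
          obtain ⟨σ', hI', hc'⟩ := ab_to_anchor a b y' x hRab
          constructor
          · intro m
            rcases anchor_letters hI' hc' m with ⟨k, hk⟩ | hk
            · rw [hk]; exact (del_point_letters hyY2 k).1
            · rw [hk]; exact hb
          · rintro w hwF ⟨p, hm⟩
            obtain ⟨q, hq1, hq2⟩ := hc' p
            exact hx₁.2 w hwF
              (anchor_transfer hI' hI1 w p q q hq1 hq2 (fun e he => rfl) hm)
    exact Relation.ReflTransGen.single
      ⟨⟨A, hA, F, rfl⟩, hYss, Or.inr (Or.inr (Or.inr hsymb))⟩
  · have hxb : ∀ x ∈ XF A F, ∀ i : ℤ, x i ≠ b := by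
      intro x hx i hib
      exact hax ⟨x, hx, i - 1, (h x hx (i - 1)).mp (by rw [sub_add_cancel]; exact hib)⟩
    have hYX : ReplaceWord [b] [] (XF A F) = XF A F := by
      ext y
      constructor
      · rintro ⟨x, hx, -, s, t, hC1, hC2, hC3⟩
        have hnm : ∀ k : ℤ, ¬ MatchesAt [b] x (s k) :=
          fun k hh => hxb x hx (s k) (matchesAt_single.mp hh)
        have hs1 : ∀ k, s (k + 1) = s k + 1 := fun k => ((hC3 k).2 (hnm k)).1
        have ht1 : ∀ k, t (k + 1) = t k + 1 := fun k => ((hC3 k).2 (hnm k)).2.1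
        have hy : ∀ m, y m = x (s 0 + (m - t 0)) := by
          intro m
          have e3 := ((hC3 (m - t 0)).2 (hnm (m - t 0))).2.2
          rw [step_one t ht1 (m - t 0), step_one s hs1 (m - t 0)] at e3
          rw [show t 0 + (m - t 0) = m by ring] at e3
          exact e3
        constructor
        · intro i
          rw [hy i]
          exact hx.1 _
        · rintro w hwF ⟨i, hmw⟩
          refine hx.2 w hwF ⟨s 0 + (i - t 0), ?_⟩
          intro j
          rw [show s 0 + (i - t 0) + ((j : ℕ) : ℤ) = s 0 + ((i + ((j : ℕ) : ℤ)) - t 0) by ring,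
            ← hy (i + ((j : ℕ) : ℤ))]
          exact hmw j
      · intro hx
        refine ⟨y, hx, by simp, fun k => k, fun k => k, fun i _ => ⟨i, rfl⟩,
          fun m => ⟨m, le_refl m, by exact lt_add_one m⟩, ?_⟩
        intro k
        exact ⟨fun hm => ((hxb y hx k (matchesAt_single.mp hm)).elim),
          fun _ => ⟨rfl, rfl, rfl⟩⟩
    have hconj : Conjugate (XF A F) (ReplaceWord [b] [] (XF A F)) := by
      rw [hYX]
      refine ⟨id, ⟨Set.mapsTo_id _, 0, 0, fun l => l.headD 0, ?_⟩, Set.bijOn_id _⟩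
      intro x hx i
      rw [List.ofFn_succ, List.ofFn_zero]
      simp
    exact Relation.ReflTransGen.single
      ⟨⟨A, hA, F, rfl⟩, by rw [hYX]; exact ⟨A, hA, F, rfl⟩, Or.inl hconj⟩

end SymbDyn
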